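/- For every n ≥ 0, ∑_{Y ⊢ n+3} binom(d(Y),2) · q^{(n+2)−ℓ(Y)} = f_n(q) as polynomials in q, where the sum runs over all Young diagrams Y with n+3 boxes and binom(d(Y),2) counts the 2-element sets of removable boxes of Y. (This is the coefficient form of Nakajima–Yoshioka's generating function for the Poincaré polynomials of the spaces Hilb^{n+1,n+3}(0)_{tr}.) -/

import Mathlib

/-!
Read by its rows, a Young diagram `Y ⊢ n + 3` is a partition `λ` of `n + 3`: `ℓ(Y)` is the
number of parts of `λ`, and the removable boxes are the last boxes of the rows that are strictly
longer than the next row, one for each distinct part size. Hence `C(d(Y), 2)` counts the pairs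
`t < s` of distinct part sizes of `λ`. Removing one part `t` and one part `s` from `λ` is a
bijection onto the triples `(t, s, ν)` with `ν ⊢ n + 3 - t - s`; it lowers the number of parts by
two, and the substitution `t = b + 1`, `s = a + b + 2` turns these triples into the triples
`(a, b, ν)` with `a + 2b + |ν| = n`, of weight `q^{n - ℓ(ν)}`.
-/

open Polynomial

/-- The number of nonempty columns of a Young diagram. -/
def ell (Γ : YoungDiagram) : ℕ := (Γ.cells.filter fun c => c.2 = 0).card

/-- The number of removable boxes of a Young diagram: the boxes whose removal leaves a
Young diagram. -/
noncomputable def removableCount (Y : YoungDiagram) : ℕ :=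
  Set.ncard {c : ℕ × ℕ | c ∈ Y ∧ IsLowerSet (↑(Y.cells.erase c) : Set (ℕ × ℕ))}

/-- `f_n(q) = Σ q^{n−ℓ(ν)}`, summed over all triples `(a,b,ν)` with `a + 2b + |ν| = n`;
this is the coefficient of `z^n` in `(1/((1−zq)(1−z²q²)))·∏_{k≥1} 1/(1−z^k q^{k−1})`. -/
noncomputable def fPoly (n : ℕ) : Polynomial ℤ :=
  ∑ p ∈ ((Finset.range (n + 1)) ×ˢ (Finset.range (n + 1))).filter
      (fun p => p.1 + 2 * p.2 ≤ n),
    ∑ ν : Nat.Partition (n - p.1 - 2 * p.2), (X : Polynomial ℤ) ^ (n - ν.parts.card)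

theorem isLowerSet_diff_singleton_iff {α : Type*} [PartialOrder α] {s : Set α}
    (hs : IsLowerSet s) {a : α} (ha : a ∈ s) :
    IsLowerSet (s \ {a}) ↔ Maximal (· ∈ s) a := by
  refine ⟨fun h => ⟨ha, fun b hb hab => ?_⟩, fun h b c hcb hb => ⟨hs hcb hb.1, ?_⟩⟩
  · by_contra hba
    exact (h hab ⟨hb, fun hb' => hba (hb' ▸ le_rfl)⟩).2 rfl
  · rintro rfl
    exact hb.2 (h.eq_of_le hb.1 hcb).symm

theorem Multiset.cons_cons_erase_erase {α : Type*} [DecidableEq α] {u : Multiset α} {a b : α}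
    (ha : a ∈ u) (hb : b ∈ u) (hab : a ≠ b) : a ::ₘ b ::ₘ (u.erase a).erase b = u := by
  rw [Multiset.cons_erase ((Multiset.mem_erase_of_ne hab.symm).2 hb), Multiset.cons_erase ha]

theorem ell_eq_length_rowLens (μ : YoungDiagram) : ell μ = μ.rowLens.length := by
  rw [ell, YoungDiagram.length_rowLens, YoungDiagram.colLen_eq_card]
  rfl

namespace YoungDiagram

theorem card_eq_sum_rowLens (μ : YoungDiagram) : μ.card = μ.rowLens.sum := by
  have hrow : ∀ c ∈ μ.cells, c.1 ∈ Finset.range (μ.colLen 0) := fun c hc => by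
    rw [Finset.mem_range, ← mem_iff_lt_colLen]
    exact μ.up_left_mem le_rfl (Nat.zero_le _) hc
  calc μ.card = ∑ i ∈ Finset.range (μ.colLen 0), μ.rowLen i := by
        rw [YoungDiagram.card, Finset.card_eq_sum_card_fiberwise hrow]
        exact Finset.sum_congr rfl fun i _ => μ.rowLen_eq_card.symm
    _ = μ.rowLens.sum := rfl

theorem removable_iff_maximal (μ : YoungDiagram) (c : ℕ × ℕ) :
    (c ∈ μ ∧ IsLowerSet (↑(μ.cells.erase c) : Set (ℕ × ℕ))) ↔ Maximal (· ∈ μ) c := by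
  rw [Finset.coe_erase]
  exact ⟨fun h => (isLowerSet_diff_singleton_iff μ.isLowerSet h.1).1 h.2,
    fun h => ⟨h.1, (isLowerSet_diff_singleton_iff μ.isLowerSet h.1).2 h⟩⟩

theorem maximal_mem_iff (μ : YoungDiagram) (c : ℕ × ℕ) :
    Maximal (· ∈ μ) c ↔ c.2 + 1 = μ.rowLen c.1 ∧ μ.rowLen (c.1 + 1) < μ.rowLen c.1 := by
  obtain ⟨i, j⟩ := c
  dsimp only
  constructor
  · rintro ⟨hc, hmax⟩
    have hright : (i, j + 1) ∉ μ := fun h => by simpa using (hmax h (by simp)).2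
    have hbelow : (i + 1, j) ∉ μ := fun h => by simpa using (hmax h (by simp)).1
    simp only [mem_iff_lt_rowLen] at hc hright hbelow
    omega
  · rintro ⟨hlen, hlt⟩
    refine ⟨mem_iff_lt_rowLen.2 (by omega), fun ⟨k, l⟩ hd hcd => ?_⟩
    replace hd : l < μ.rowLen k := mem_iff_lt_rowLen.1 hd
    obtain ⟨hik, hjl⟩ := Prod.mk_le_mk.1 hcd
    have hki : k = i := by
      by_contra hne
      have := μ.rowLen_anti (i + 1) k (by omega)
      omega
    subst hki
    exact Prod.mk_le_mk.2 ⟨le_rfl, by omega⟩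

theorem removableCount_eq_card_toFinset_rowLens (μ : YoungDiagram) :
    removableCount μ = μ.rowLens.toFinset.card := by
  have hrem : {c : ℕ × ℕ | c ∈ μ ∧ IsLowerSet (↑(μ.cells.erase c) : Set (ℕ × ℕ))}
      = {c | Maximal (· ∈ μ) c} := Set.ext (removable_iff_maximal μ)
  rw [removableCount, hrem, ← Set.ncard_coe_finset]
  refine Set.ncard_congr (fun c _ => c.2 + 1) (fun c hc => ?_)
    (fun c d (hc : Maximal _ c) (hd : Maximal _ d) hcd => ?_) fun L hL => ?_
  · obtain ⟨hlen, -⟩ := (maximal_mem_iff μ c).1 hc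
    have hrow : c.1 < μ.colLen 0 := mem_iff_lt_colLen.1 (mem_iff_lt_rowLen.2 (by omega))
    rw [Finset.mem_coe, List.mem_toFinset, rowLens, List.mem_map]
    exact ⟨c.1, List.mem_range.2 hrow, hlen.symm⟩
  · rcases le_total c.1 d.1 with h | h
    · exact hc.eq_of_le hd.prop (Prod.le_def.2 ⟨h, by omega⟩)
    · exact (hd.eq_of_le hc.prop (Prod.le_def.2 ⟨h, by omega⟩)).symm
  · rw [Finset.mem_coe, List.mem_toFinset, rowLens, List.mem_map] at hL
    obtain ⟨i, hi, rfl⟩ := hL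
    have hpos : 0 < μ.rowLen i :=
      mem_iff_lt_rowLen.1 (mem_iff_lt_colLen.2 (List.mem_range.1 hi))
    -- the preimage of the row length `μ.rowLen i` is the last box of column `μ.rowLen i - 1`
    set K := μ.colLen (μ.rowLen i - 1)
    have hiK : i < K := mem_iff_lt_colLen.1 (mem_iff_lt_rowLen.2 (by omega))
    have hlast : μ.rowLen K ≤ μ.rowLen i - 1 :=
      not_lt.1 fun h => (lt_irrefl K) (mem_iff_lt_colLen.1 (mem_iff_lt_rowLen.2 h))
    have hprev : μ.rowLen i - 1 < μ.rowLen (K - 1) :=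
      mem_iff_lt_rowLen.1 (mem_iff_lt_colLen.2 (by omega))
    have hanti := μ.rowLen_anti i (K - 1) (by omega)
    refine ⟨(K - 1, μ.rowLen i - 1), (maximal_mem_iff μ _).2 ?_, by omega⟩
    dsimp only
    rw [Nat.sub_add_cancel (by omega : 1 ≤ K)]
    omega

theorem rowLens_ofRowLens_sort {s : Multiset ℕ} (hs : ∀ x ∈ s, 0 < x) :
    (ofRowLens (s.sort (· ≥ ·)) (s.pairwise_sort _).sortedGE).rowLens = s.sort (· ≥ ·) :=
  rowLens_ofRowLens_eq_self fun x hx => hs x ((Multiset.mem_sort _).1 hx)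

def equivPartition (m : ℕ) : {μ : YoungDiagram // μ.card = m} ≃ m.Partition where
  toFun μ :=
    { parts := μ.1.rowLens
      parts_pos := fun hi => μ.1.pos_of_mem_rowLens _ (Multiset.mem_coe.1 hi)
      parts_sum := by rw [Multiset.sum_coe, ← card_eq_sum_rowLens, μ.2] }
  invFun p := ⟨ofRowLens (p.parts.sort (· ≥ ·)) (p.parts.pairwise_sort _).sortedGE, by
    rw [card_eq_sum_rowLens, rowLens_ofRowLens_sort fun _ => p.parts_pos, ← Multiset.sum_coe,
      Multiset.sort_eq, p.parts_sum]⟩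
  left_inv μ := Subtype.ext <| equivListRowLens.injective <| Subtype.ext <| by
    simp only [equivListRowLens_apply_coe]
    rw [rowLens_ofRowLens_sort fun x => μ.1.pos_of_mem_rowLens x, Multiset.coe_sort,
      List.mergeSort_eq_self _ μ.1.rowLens_sorted.pairwise]
  right_inv p := Nat.Partition.ext <| by
    simp only
    rw [rowLens_ofRowLens_sort fun _ => p.parts_pos, Multiset.sort_eq]

@[simp]
theorem equivPartition_parts {m : ℕ} (μ : {μ : YoungDiagram // μ.card = m}) :
    (equivPartition m μ).parts = μ.1.rowLens :=
  rfl

end YoungDiagram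

namespace Nat.Partition

open Finset

variable {m t s : ℕ}

def eraseTwo (p : m.Partition) (ht : t ∈ p.parts) (hs : s ∈ p.parts) (hts : t ≠ s) :
    (m - t - s).Partition where
  parts := (p.parts.erase t).erase s
  parts_pos h := p.parts_pos (Multiset.mem_of_mem_erase (Multiset.mem_of_mem_erase h))
  parts_sum := by
    have := congrArg Multiset.sum (Multiset.cons_cons_erase_erase ht hs hts)
    rw [Multiset.sum_cons, Multiset.sum_cons, p.parts_sum] at this
    omega

def consTwo (ν : (m - t - s).Partition) (ht : 0 < t) (hs : 0 < s) (hm : t + s ≤ m) :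
    m.Partition where
  parts := t ::ₘ s ::ₘ ν.parts
  parts_pos h := by
    rcases Multiset.mem_cons.1 h with rfl | h
    · exact ht
    rcases Multiset.mem_cons.1 h with rfl | h
    · exact hs
    exact ν.parts_pos h
  parts_sum := by
    rw [Multiset.sum_cons, Multiset.sum_cons, ν.parts_sum]
    omega

def partSizePairs (m : ℕ) : Finset (ℕ × ℕ) :=
  {x ∈ range (m + 1) ×ˢ range (m + 1) | 0 < x.1 ∧ x.1 < x.2 ∧ x.1 + x.2 ≤ m}

theorem mem_partSizePairs {x : ℕ × ℕ} :
    x ∈ partSizePairs m ↔ 0 < x.1 ∧ x.1 < x.2 ∧ x.1 + x.2 ≤ m := by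
  simp only [partSizePairs, mem_filter, mem_product, mem_range]
  omega

theorem sum_choose_card_parts_smul {M : Type*} [AddCommMonoid M] (m : ℕ)
    (F : Multiset ℕ → M) :
    ∑ p : m.Partition, (#p.parts.toFinset).choose 2 • F p.parts
      = ∑ x ∈ partSizePairs m, ∑ ν : (m - x.1 - x.2).Partition,
          F (x.1 ::ₘ x.2 ::ₘ ν.parts) := by
  simp_rw [← card_product_filter_lt, ← sum_const]
  rw [sum_sigma', sum_sigma']
  set S := univ.sigma fun p : m.Partition => {x ∈ p.parts.toFinset ×ˢ p.parts.toFinset | x.1 < x.2}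
  have mem_S : ∀ a ∈ S, a.2.1 ∈ a.1.parts ∧ a.2.2 ∈ a.1.parts ∧ a.2.1 < a.2.2 := fun a ha => by
    simpa [S, and_assoc] using ha
  have cons_erase : ∀ a ∈ S,
      a.2.1 ::ₘ a.2.2 ::ₘ (a.1.parts.erase a.2.1).erase a.2.2 = a.1.parts := fun a ha =>
    Multiset.cons_cons_erase_erase (mem_S a ha).1 (mem_S a ha).2.1 (mem_S a ha).2.2.ne
  have mem_T : ∀ b ∈ (partSizePairs m).sigma fun x => (univ : Finset (m - x.1 - x.2).Partition),
      0 < b.1.1 ∧ b.1.1 < b.1.2 ∧ b.1.1 + b.1.2 ≤ m := fun b hb =>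
    mem_partSizePairs.1 (mem_sigma.1 hb).1
  refine sum_bij'
    (fun a ha => ⟨a.2, eraseTwo a.1 (mem_S a ha).1 (mem_S a ha).2.1 (mem_S a ha).2.2.ne⟩)
    (fun b hb => ⟨consTwo b.2 (mem_T b hb).1 ((mem_T b hb).1.trans (mem_T b hb).2.1)
      (mem_T b hb).2.2, b.1⟩)
    (fun a ha => ?_) (fun b hb => ?_) (fun a ha => ?_) (fun b hb => ?_) (fun a ha => ?_)
  · obtain ⟨ht, -, hts⟩ := mem_S a ha
    have hsum := congrArg Multiset.sum (cons_erase a ha)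
    rw [Multiset.sum_cons, Multiset.sum_cons, a.1.parts_sum] at hsum
    simp only [mem_sigma, mem_univ, and_true, mem_partSizePairs]
    exact ⟨a.1.parts_pos ht, hts, by omega⟩
  · simp [S, consTwo, (mem_T b hb).2.1]
  · exact Sigma.ext (Nat.Partition.ext (cons_erase a ha)) HEq.rfl
  · exact Sigma.ext rfl (heq_of_eq (Nat.Partition.ext (by simp [eraseTwo, consTwo])))
  · simp only [eraseTwo, cons_erase a ha]

theorem sum_partSizePairs_add_three {M : Type*} [AddCommMonoid M] (n : ℕ) (G : ℕ → M) :
    ∑ x ∈ partSizePairs (n + 3), G (n + 3 - x.1 - x.2)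
      = ∑ y ∈ {y ∈ range (n + 1) ×ˢ range (n + 1) | y.1 + 2 * y.2 ≤ n},
          G (n - y.1 - 2 * y.2) := by
  refine sum_nbij' (fun x => (x.2 - x.1 - 1, x.1 - 1)) (fun y => (y.2 + 1, y.1 + y.2 + 2))
    (fun x hx => ?_) (fun y hy => ?_) (fun x hx => ?_) (fun y hy => ?_) (fun x hx => ?_)
  all_goals simp only [mem_filter, mem_product, mem_range, mem_partSizePairs, Prod.ext_iff] at *
  exacts [by omega, by omega, by omega, by omega, congrArg G (by omega)]

end Nat.Partition

/-- `Σ_{Y ⊢ n+3} C(d(Y),2)·q^{(n+2)−ℓ(Y)} = f_n(q)`. -/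
theorem statement17 (n : ℕ) :
    (∑ᶠ Y : {Y : YoungDiagram // Y.card = n + 3},
        ((removableCount Y.1).choose 2 : Polynomial ℤ)
          * (X : Polynomial ℤ) ^ ((n + 2) - ell Y.1))
      = fPoly n := by
  have hweight : ∀ Y : {Y : YoungDiagram // Y.card = n + 3},
      ((removableCount Y.1).choose 2 : ℤ[X]) * X ^ ((n + 2) - ell Y.1)
        = (YoungDiagram.equivPartition _ Y).parts.toFinset.card.choose 2
          • X ^ (n + 2 - (YoungDiagram.equivPartition _ Y).parts.card) := by
    intro Y
    rw [YoungDiagram.equivPartition_parts, List.toFinset_coe, Multiset.coe_card,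
      YoungDiagram.removableCount_eq_card_toFinset_rowLens, ell_eq_length_rowLens, nsmul_eq_mul]
  rw [finsum_congr hweight, finsum_comp_equiv (YoungDiagram.equivPartition _)
      (f := fun p => p.parts.toFinset.card.choose 2 • (X : ℤ[X]) ^ (n + 2 - p.parts.card)),
    finsum_eq_sum_of_fintype,
    Nat.Partition.sum_choose_card_parts_smul _ fun u => X ^ (n + 2 - u.card)]
  simp only [Multiset.card_cons, Nat.add_sub_add_right]
  exact Nat.Partition.sum_partSizePairs_add_three n
    fun k => ∑ ν : k.Partition, (X : ℤ[X]) ^ (n - ν.parts.card)
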